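/- For the test of X ~ N(0,σ²) against the mixture (1/2)N(a,σ²) + (1/2)N(−a,σ²) with a, σ > 0, among all tests T with P₀(T = 1) ≤ 1 − δ, the minimal average type-II error (1/2)P_a(T=0) + (1/2)P_{−a}(T=0) equals Φ(Φ⁻¹((1+δ)/2) + a/σ) − Φ(−Φ⁻¹((1+δ)/2) + a/σ). -/

import Mathlib

open MeasureTheory ProbabilityTheory Real Set

/-- The standard normal CDF. -/
noncomputable def Phi (y : ℝ) : ℝ := ((gaussianReal 0 1) (Set.Iic y)).toReal

/-- The standard normal quantile function (inverse CDF). -/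
noncomputable def PhiInv : ℝ → ℝ := Function.invFun Phi

/-!
Write `φ_m` for the density of `N(m, v)`. The mixture density satisfies
`(φ_a + φ_{-a}) / 2 = exp (-a² / 2v) · cosh (a x / v) · φ_0`, and `cosh (a x / v)` is increasing
in `|x|`, so `{|x| ≤ t}` is a likelihood-ratio acceptance region. By the Neyman–Pearson argument
it minimises the type II error among acceptance regions of at least its null mass. With
`t = σ c`, `c = Φ⁻¹((1 + δ) / 2)`, its null mass is `2Φ(c) - 1 = δ`, and its mass under
`N(±a, σ²)` is `Φ(c + a/σ) - Φ(-c + a/σ)`.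
-/

open scoped NNReal

theorem setIntegral_le_setIntegral_of_nonpos_of_nonneg_compl {α : Type*} [MeasurableSpace α]
    {μ : Measure α} {g : α → ℝ} {A B : Set α} (hg : Integrable g μ) (hA : MeasurableSet A)
    (hB : MeasurableSet B) (h_in : ∀ x ∈ A, g x ≤ 0) (h_out : ∀ x ∉ A, 0 ≤ g x) :
    ∫ x in A, g x ∂μ ≤ ∫ x in B, g x ∂μ := by
  rw [← integral_indicator hA, ← integral_indicator hB]
  refine integral_mono (hg.indicator hA) (hg.indicator hB) fun x => ?_
  by_cases hxA : x ∈ A <;> by_cases hxB : x ∈ B <;>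
    simp [indicator_of_mem, indicator_of_notMem, hxA, hxB, h_in, h_out]

theorem neyman_pearson_setIntegral_le {α : Type*} [MeasurableSpace α] {μ : Measure α}
    {f₀ f₁ : α → ℝ} {A B : Set α} {k : ℝ} (hf₀ : Integrable f₀ μ) (hf₁ : Integrable f₁ μ)
    (hA : MeasurableSet A) (hB : MeasurableSet B) (hk : 0 ≤ k)
    (h_in : ∀ x ∈ A, f₁ x ≤ k * f₀ x) (h_out : ∀ x ∉ A, k * f₀ x ≤ f₁ x)
    (h_size : ∫ x in A, f₀ x ∂μ ≤ ∫ x in B, f₀ x ∂μ) :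
    ∫ x in A, f₁ x ∂μ ≤ ∫ x in B, f₁ x ∂μ := by
  have hg := setIntegral_le_setIntegral_of_nonpos_of_nonneg_compl
    (g := fun x => f₁ x - k * f₀ x) (hf₁.sub (hf₀.const_mul k)) hA hB
    (fun x hx => sub_nonpos.2 (h_in x hx)) (fun x hx => sub_nonneg.2 (h_out x hx))
  simp only [integral_sub hf₁.integrableOn (hf₀.const_mul k).integrableOn,
    integral_const_mul] at hg
  nlinarith [mul_le_mul_of_nonneg_left h_size hk]

theorem gaussianReal_real_eq_setIntegral (m : ℝ) {v : ℝ≥0} (hv : v ≠ 0) (s : Set ℝ) :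
    (gaussianReal m v).real s = ∫ x in s, gaussianPDFReal m v x := by
  rw [measureReal_def, gaussianReal_apply_eq_integral m hv,
    ENNReal.toReal_ofReal (integral_nonneg fun x => gaussianPDFReal_nonneg m v x)]

theorem Phi_eq_cdf : Phi = cdf (gaussianReal 0 1) :=
  funext fun y => (cdf_eq_real _ y).symm

theorem monotone_Phi : Monotone Phi := Phi_eq_cdf ▸ monotone_cdf _

theorem continuous_Phi : Continuous Phi := by
  have hφ := integrable_gaussianPDFReal 0 1
  have h : Phi = fun y => Phi 0 + ∫ t in (0 : ℝ)..y, gaussianPDFReal 0 1 t := by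
    funext y
    rw [← intervalIntegral.integral_Iic_sub_Iic hφ.integrableOn hφ.integrableOn, Phi, Phi,
      ← measureReal_def, ← measureReal_def, gaussianReal_real_eq_setIntegral 0 one_ne_zero,
      gaussianReal_real_eq_setIntegral 0 one_ne_zero]
    ring
  rw [h]
  exact continuous_const.add (intervalIntegral.continuous_primitive
    (fun _ _ => hφ.intervalIntegrable) 0)

theorem Phi_neg (x : ℝ) : Phi (-x) = 1 - Phi x := by
  have hsymm : (gaussianReal 0 1).real (Iic (-x)) = (gaussianReal 0 1).real (Ici x) := by
    conv_lhs => rw [← neg_zero, ← gaussianReal_map_neg]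
    rw [map_measureReal_apply measurable_neg measurableSet_Iic]
    congr 1
    ext t
    simp
  have := nullSingletonClass_gaussianReal (μ := 0) one_ne_zero
  rw [Phi, Phi, ← measureReal_def, ← measureReal_def, hsymm, ← compl_Iio,
    probReal_compl_eq_one_sub measurableSet_Iio, measureReal_congr Iio_ae_eq_Iic]

theorem Phi_zero : Phi 0 = 1 / 2 := by
  linarith [neg_zero (G := ℝ) ▸ Phi_neg 0]

theorem Phi_PhiInv {p : ℝ} (h0 : 0 < p) (h1 : p < 1) : Phi (PhiInv p) = p := by
  refine Function.invFun_eq ?_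
  obtain ⟨x, hx⟩ := ((Phi_eq_cdf ▸ tendsto_cdf_atBot _).eventually_lt_const h0).exists
  obtain ⟨y, hy⟩ := ((Phi_eq_cdf ▸ tendsto_cdf_atTop _).eventually_const_lt h1).exists
  exact intermediate_value_univ x y continuous_Phi ⟨hx.le, hy.le⟩

theorem gaussianReal_real_Iic (m : ℝ) {σ : ℝ} (hσ : 0 < σ) (y : ℝ) :
    (gaussianReal m (σ ^ 2).toNNReal).real (Iic y) = Phi ((y - m) / σ) := by
  have hstd :
      (gaussianReal m (σ ^ 2).toNNReal).map (fun x => (x - m) / σ) = gaussianReal 0 1 := by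
    rw [← Function.comp_def (· / σ) (· - m), ← Measure.map_map (by fun_prop) (by fun_prop),
      gaussianReal_map_sub_const, gaussianReal_map_div_const, sub_self, zero_div]
    congr 1
    ext
    simp [sq_nonneg σ, hσ.ne']
  rw [Phi, ← measureReal_def, ← hstd, map_measureReal_apply (by fun_prop) measurableSet_Iic]
  congr 1
  ext x
  simp [div_le_div_iff_of_pos_right hσ]

theorem gaussianReal_real_Ioc_neg_self (m : ℝ) {σ : ℝ} (hσ : 0 < σ) {t : ℝ}
    (ht : 0 ≤ t) :
    (gaussianReal m (σ ^ 2).toNNReal).real (Ioc (-(σ * t)) (σ * t))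
      = Phi (t - m / σ) - Phi (-t - m / σ) := by
  have hle : -(σ * t) ≤ σ * t := neg_le_self (mul_nonneg hσ.le ht)
  have hunion := measureReal_union (μ := gaussianReal m (σ ^ 2).toNNReal)
    (Iic_disjoint_Ioc (le_refl (-(σ * t))) (c := σ * t)) measurableSet_Ioc
  rw [Iic_union_Ioc_eq_Iic hle, gaussianReal_real_Iic m hσ, gaussianReal_real_Iic m hσ] at hunion
  have e1 : (σ * t - m) / σ = t - m / σ := by field_simp
  have e2 : (-(σ * t) - m) / σ = -t - m / σ := by field_simp
  rw [e1, e2] at hunion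
  linarith

theorem gaussianPDFReal_eq_exp_mul (m : ℝ) (v : ℝ≥0) (x : ℝ) :
    gaussianPDFReal m v x = rexp (m / v * x - m ^ 2 / (2 * v)) * gaussianPDFReal 0 v x := by
  rcases eq_or_ne v 0 with rfl | hv
  · simp [gaussianPDFReal_zero_var]
  have hv' : (v : ℝ) ≠ 0 := by exact_mod_cast hv
  simp only [gaussianPDFReal_def, sub_zero]
  rw [mul_left_comm, ← Real.exp_add]
  congr 2
  field_simp
  ring

theorem gaussianPDFReal_add_gaussianPDFReal_neg (a : ℝ) (v : ℝ≥0) (x : ℝ) :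
    gaussianPDFReal a v x + gaussianPDFReal (-a) v x
      = 2 * rexp (-a ^ 2 / (2 * v)) * cosh (a / v * x) * gaussianPDFReal 0 v x := by
  rw [gaussianPDFReal_eq_exp_mul a, gaussianPDFReal_eq_exp_mul (-a), cosh_eq, neg_sq,
    sub_eq_add_neg, sub_eq_add_neg, Real.exp_add, Real.exp_add, neg_div, neg_mul, neg_div]
  ring

theorem cosh_mul_le_cosh_mul (b : ℝ) {x y : ℝ} (h : |x| ≤ |y|) :
    cosh (b * x) ≤ cosh (b * y) := by
  rw [cosh_le_cosh, abs_mul, abs_mul]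
  exact mul_le_mul_of_nonneg_left h (abs_nonneg b)

theorem gaussianReal_add_neg_real_Ioc_neg_self_le (a : ℝ) {v : ℝ≥0} (hv : v ≠ 0) {t : ℝ}
    (ht : 0 ≤ t) {B : Set ℝ} (hB : MeasurableSet B)
    (h_size : (gaussianReal 0 v).real (Ioc (-t) t) ≤ (gaussianReal 0 v).real B) :
    (gaussianReal a v).real (Ioc (-t) t) + (gaussianReal (-a) v).real (Ioc (-t) t)
      ≤ (gaussianReal a v).real B + (gaussianReal (-a) v).real B := by
  have hφ := fun m => integrable_gaussianPDFReal m v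
  simp only [gaussianReal_real_eq_setIntegral _ hv] at h_size ⊢
  simp only [← integral_add (hφ a).integrableOn (hφ (-a)).integrableOn]
  have h_ratio : ∀ {x y : ℝ} (z : ℝ), |x| ≤ |y| →
      2 * rexp (-a ^ 2 / (2 * v)) * cosh (a / v * x) * gaussianPDFReal 0 v z
        ≤ 2 * rexp (-a ^ 2 / (2 * v)) * cosh (a / v * y) * gaussianPDFReal 0 v z :=
    fun z h => by gcongr; exacts [gaussianPDFReal_nonneg 0 v z, cosh_mul_le_cosh_mul _ h]
  refine neyman_pearson_setIntegral_le (k := 2 * rexp (-a ^ 2 / (2 * v)) * cosh (a / v * t))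
    (hφ 0) ((hφ a).add (hφ (-a))) measurableSet_Ioc hB (by positivity) (fun x hx => ?_)
    (fun x hx => ?_) h_size
  · rw [gaussianPDFReal_add_gaussianPDFReal_neg]
    exact h_ratio x ((abs_le.2 ⟨hx.1.le, hx.2⟩).trans (le_abs_self t))
  · rw [gaussianPDFReal_add_gaussianPDFReal_neg]
    refine h_ratio x ((abs_of_nonneg ht).trans_le (not_lt.1 fun hlt => hx ?_))
    exact ⟨(abs_lt.1 hlt).1, (abs_lt.1 hlt).2.le⟩

theorem neyman_pearson_mixture_general (a σ δ : ℝ) (hσ : 0 < σ)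
    (hδ0 : 0 < δ) (hδ1 : δ < 1) :
    sInf {e : ℝ | ∃ R : Set ℝ, MeasurableSet R ∧
        ((gaussianReal 0 (σ ^ 2).toNNReal) R).toReal ≤ 1 - δ ∧
        e = (1 / 2) * ((gaussianReal a (σ ^ 2).toNNReal) Rᶜ).toReal
          + (1 / 2) * ((gaussianReal (-a) (σ ^ 2).toNNReal) Rᶜ).toReal}
      = Phi (PhiInv ((1 + δ) / 2) + a / σ) - Phi (-(PhiInv ((1 + δ) / 2)) + a / σ) := by
  set c := PhiInv ((1 + δ) / 2)
  set T := Phi (c + a / σ) - Phi (-c + a / σ)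
  have hc : Phi c = (1 + δ) / 2 := Phi_PhiInv (by linarith) (by linarith)
  have hc0 : 0 ≤ c := (monotone_Phi.reflect_lt (by rw [Phi_zero, hc]; linarith)).le
  set A := Ioc (-(σ * c)) (σ * c)
  have hA_null : (gaussianReal 0 (σ ^ 2).toNNReal).real A = δ := by
    rw [gaussianReal_real_Ioc_neg_self 0 hσ hc0, zero_div, sub_zero, sub_zero, Phi_neg, hc]
    ring
  have hA_plus : (gaussianReal a (σ ^ 2).toNNReal).real A = T := by
    rw [gaussianReal_real_Ioc_neg_self a hσ hc0, show c - a / σ = -(-c + a / σ) by ring,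
      show -c - a / σ = -(c + a / σ) by ring, Phi_neg, Phi_neg]
    ring
  have hA_minus : (gaussianReal (-a) (σ ^ 2).toNNReal).real A = T := by
    rw [gaussianReal_real_Ioc_neg_self (-a) hσ hc0, neg_div, sub_neg_eq_add, sub_neg_eq_add]
  simp only [← measureReal_def]
  refine IsLeast.csInf_eq ⟨⟨Aᶜ, measurableSet_Ioc.compl, ?_, ?_⟩, ?_⟩
  · rw [probReal_compl_eq_one_sub measurableSet_Ioc, hA_null]
  · rw [compl_compl, hA_plus, hA_minus]
    ring
  · rintro _ ⟨R, hR, h_size, rfl⟩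
    have h_opt := gaussianReal_add_neg_real_Ioc_neg_self_le a (v := (σ ^ 2).toNNReal)
      (by positivity) (mul_nonneg hσ.le hc0) hR.compl
      (by rw [probReal_compl_eq_one_sub hR, hA_null]; linarith)
    rw [hA_plus, hA_minus] at h_opt
    linarith

/-- Neyman–Pearson for testing `N(0,σ²)` against the mixture
`(1/2)N(a,σ²) + (1/2)N(−a,σ²)`: among all measurable rejection regions `R` with
`P₀(X ∈ R) ≤ 1 − δ`, the minimal average type-II error equals
`Φ(Φ⁻¹((1+δ)/2) + a/σ) − Φ(−Φ⁻¹((1+δ)/2) + a/σ)`. -/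
theorem neyman_pearson_mixture (a σ δ : ℝ) (ha : 0 < a) (hσ : 0 < σ)
    (hδ0 : 0 < δ) (hδ1 : δ < 1) :
    sInf {e : ℝ | ∃ R : Set ℝ, MeasurableSet R ∧
        ((gaussianReal 0 (σ ^ 2).toNNReal) R).toReal ≤ 1 - δ ∧
        e = (1 / 2) * ((gaussianReal a (σ ^ 2).toNNReal) Rᶜ).toReal
          + (1 / 2) * ((gaussianReal (-a) (σ ^ 2).toNNReal) Rᶜ).toReal}
      = Phi (PhiInv ((1 + δ) / 2) + a / σ) - Phi (-(PhiInv ((1 + δ) / 2)) + a / σ) :=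
  neyman_pearson_mixture_general a σ δ hσ hδ0 hδ1
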